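/- arXiv:0901.4280 — 4 statements merged into one kernel-verified Lean document; each statement's English description precedes it below -/
import Mathlib

section
/- Let Q = ℂ^ℓ/Γ with Γ a discrete subgroup, let V be the real span of Γ in ℂ^ℓ, and suppose V is a real subspace that is not a complex subspace and is proper in ℂ^ℓ. If W is a real complement to V ∩ iV in V containing a lattice W ∩ Γ of full rank in W, then (W + iW)/(W ∩ Γ) is a closed complex subgroup of Q isomorphic to (ℂ^*)^s where s = dim_ℝ W. -/
/-!
Since `W ⊓ (V ⊓ iV) = 0`, the subspace `iW` meets `V` only in `0`. Hence a `ℤ`-basis `b` of the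
lattice `W ∩ Γ`, which is an `ℝ`-basis of `W`, is a `ℂ`-basis of `W + iW`, and in these
coordinates `z ↦ ∑ zᵢ bᵢ` lands in `Γ` exactly when `z ∈ ℤ^s`. So the image of `W + iW` in `Q` is
`ℂ^s ⧸ ℤ^s ≅ (ℂ^*)^s`, the isomorphism being induced by `z ↦ exp (2πiz)`; both quotient maps are
open by the open mapping theorem, since the image is closed, hence locally compact.
It is closed because `Γ + W` is closed (`W ∩ Γ` is cocompact in `W`) and lies in `V`, and adding
the subspace `iW`, transverse to `V`, preserves closedness.
-/

open Complex Set Submodule Topology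
open scoped Pointwise Real

theorem Topology.IsQuotientMap.exists_homeomorph_comp_eq {X A B : Type*} [TopologicalSpace X]
    [TopologicalSpace A] [TopologicalSpace B] {φ : X → A} {χ : X → B}
    (hφ : IsQuotientMap φ) (hχ : IsQuotientMap χ) (h : ∀ x y, φ x = φ y ↔ χ x = χ y) :
    ∃ e : A ≃ₜ B, ∀ x, e (φ x) = χ x := by
  have hχφ : Function.FactorsThrough χ φ := fun x y hxy => (h x y).1 hxy
  have hφχ : Function.FactorsThrough φ χ := fun x y hxy => (h x y).2 hxy
  let F := hφ.lift (f := ⟨φ, hφ.continuous⟩) ⟨χ, hχ.continuous⟩ hχφ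
  let G := hχ.lift (f := ⟨χ, hχ.continuous⟩) ⟨φ, hφ.continuous⟩ hφχ
  have hF (x : X) : F (φ x) = χ x :=
    DFunLike.congr_fun (hφ.lift_comp (f := ⟨φ, hφ.continuous⟩) ⟨χ, hχ.continuous⟩ hχφ) x
  have hG (x : X) : G (χ x) = φ x :=
    DFunLike.congr_fun (hχ.lift_comp (f := ⟨χ, hχ.continuous⟩) ⟨φ, hφ.continuous⟩ hφχ) x
  refine ⟨{ toFun := F, invFun := G, left_inv := ?_, right_inv := ?_ }, hF⟩
  · intro a
    obtain ⟨x, rfl⟩ := hφ.surjective a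
    rw [hF, hG]
  · intro b
    obtain ⟨x, rfl⟩ := hχ.surjective b
    rw [hG, hF]

theorem AddMonoidHom.isOpenQuotientMap_rangeRestrict {G Q : Type*} [AddGroup G]
    [TopologicalSpace G] [IsTopologicalAddGroup G] [SigmaCompactSpace G] [AddGroup Q]
    [TopologicalSpace Q] [IsTopologicalAddGroup Q] [LocallyCompactSpace Q] [T2Space Q]
    (φ : G →+ Q) (hφ : Continuous φ) (hclosed : IsClosed (φ.range : Set Q)) :
    IsOpenQuotientMap φ.rangeRestrict := by
  have : LocallyCompactSpace φ.range := hclosed.locallyCompactSpace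
  have hcont : Continuous φ.rangeRestrict := hφ.subtype_mk _
  exact ⟨φ.rangeRestrict_surjective, hcont,
    φ.rangeRestrict.isOpenMap_of_sigmaCompact φ.rangeRestrict_surjective hcont⟩

theorem QuotientAddGroup.isClosed_image_mk {G : Type*} [AddGroup G] [TopologicalSpace G]
    (N : AddSubgroup G) {S : Set G} (hS : IsClosed (S + (N : Set G))) :
    IsClosed ((↑) '' S : Set (G ⧸ N)) := by
  rwa [← (isQuotientMap_mk N).isClosed_preimage, preimage_image_mk_eq_add]

noncomputable def expTwoPiIUnit (z : ℂ) : ℂˣ := Units.mk0 (exp (2 * π * I * z)) (exp_ne_zero _)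

theorem expTwoPiIUnit_add (z w : ℂ) :
    expTwoPiIUnit (z + w) = expTwoPiIUnit z * expTwoPiIUnit w := by
  ext
  simp [expTwoPiIUnit, mul_add, exp_add]

theorem expTwoPiIUnit_eq_iff {z w : ℂ} :
    expTwoPiIUnit z = expTwoPiIUnit w ↔ ∃ n : ℤ, z - w = n := by
  simp only [expTwoPiIUnit, Units.ext_iff, Units.val_mk0, exp_eq_exp_iff_exists_int]
  refine exists_congr fun n => ?_
  rw [show 2 * π * I * w + n * (2 * π * I) = 2 * π * I * (w + n) by ring,
    mul_right_inj' two_pi_I_ne_zero, sub_eq_iff_eq_add']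

theorem isOpenQuotientMap_expTwoPiIUnit : IsOpenQuotientMap expTwoPiIUnit := by
  refine ⟨fun u => ⟨log u / (2 * π * I), ?_⟩, ?_, ?_⟩
  · ext
    simp [expTwoPiIUnit, mul_div_cancel₀ _ two_pi_I_ne_zero, exp_log u.ne_zero]
  · refine Units.continuous_iff.mpr ⟨by fun_prop, ?_⟩
    simp only [expTwoPiIUnit, Units.val_inv_eq_inv_val, Units.val_mk0, ← exp_neg]
    fun_prop
  · rw [Units.isOpenEmbedding_val.isOpenMap_iff]
    exact isOpenMap_exp.comp (Homeomorph.mulLeft₀ _ two_pi_I_ne_zero).isOpenMap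

theorem AddMonoidHom.exists_homeomorph_range_units {ι Q : Type*} [Finite ι] [AddCommGroup Q]
    [TopologicalSpace Q] [IsTopologicalAddGroup Q] [LocallyCompactSpace Q] [T2Space Q]
    (φ : (ι → ℂ) →+ Q) (hφ : Continuous φ) (hclosed : IsClosed (φ.range : Set Q))
    (hker : ∀ z, φ z = 0 ↔ ∀ i, ∃ n : ℤ, z i = n) :
    ∃ e : φ.range ≃ₜ (ι → ℂˣ), ∀ x y, e (x + y) = e x * e y := by
  obtain ⟨e, he⟩ :=
    (φ.isOpenQuotientMap_rangeRestrict hφ hclosed).isQuotientMap.exists_homeomorph_comp_eq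
      (IsOpenQuotientMap.piMap fun _ : ι => isOpenQuotientMap_expTwoPiIUnit).isQuotientMap
      fun z w => by
        rw [Subtype.ext_iff, coe_rangeRestrict, coe_rangeRestrict, ← sub_eq_zero, ← map_sub, hker,
          funext_iff]
        simp only [Pi.map_apply, expTwoPiIUnit_eq_iff, Pi.sub_apply]
  refine ⟨e, fun x y => ?_⟩
  obtain ⟨z, rfl⟩ := φ.rangeRestrict_surjective x
  obtain ⟨w, rfl⟩ := φ.rangeRestrict_surjective y
  rw [← map_add, he, he, he]
  funext i
  exact expTwoPiIUnit_add _ _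

def AddSubgroup.submoduleOf {E : Type*} [AddCommGroup E] [Module ℝ E] (Γ : AddSubgroup E)
    (W : Submodule ℝ E) : Submodule ℤ W :=
  Γ.toIntSubmodule.comap (W.subtype.restrictScalars ℤ)

section Lattice

variable {E : Type*} [NormedAddCommGroup E] [NormedSpace ℝ E] (Γ : AddSubgroup E)
  [DiscreteTopology Γ] (W : Submodule ℝ E)

instance : DiscreteTopology (Γ.submoduleOf W) :=
  DiscreteTopology.of_continuous_injective (f := fun x => (⟨x.1.1, x.2⟩ : Γ)) (by fun_prop)
    fun _ _ h => Subtype.ext (Subtype.ext (congrArg Subtype.val h :))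

variable {Γ W}

theorem isZLattice_submoduleOf (h : span ℝ ((W : Set E) ∩ Γ) = W) :
    IsZLattice ℝ (Γ.submoduleOf W) where
  span_top := by
    refine map_injective_of_injective W.injective_subtype ?_
    rw [map_span, Submodule.map_top, range_subtype]
    convert h using 2
    ext y
    exact ⟨fun ⟨x, hx, hxy⟩ => hxy ▸ ⟨x.2, hx⟩, fun ⟨hyW, hyΓ⟩ => ⟨⟨y, hyW⟩, hyΓ, rfl⟩⟩

variable [FiniteDimensional ℝ E]

theorem exists_basis_span_int_eq_submoduleOf (h : span ℝ ((W : Set E) ∩ Γ) = W) :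
    ∃ b : Module.Basis (Fin (Module.finrank ℝ W)) ℝ W, span ℤ (range b) = Γ.submoduleOf W := by
  have := isZLattice_submoduleOf h
  have := ZLattice.module_free ℝ (Γ.submoduleOf W)
  have := ZLattice.module_finite ℝ (Γ.submoduleOf W)
  let b := Module.finBasisOfFinrankEq ℤ _ (ZLattice.rank ℝ (Γ.submoduleOf W))
  exact ⟨b.ofZLatticeBasis ℝ, b.ofZLatticeBasis_span ℝ⟩

theorem isClosed_add_of_span_inter_eq (h : span ℝ ((W : Set E) ∩ Γ) = W) :
    IsClosed ((Γ : Set E) + (W : Set E)) := by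
  obtain ⟨b, hb⟩ := exists_basis_span_int_eq_submoduleOf h
  obtain ⟨R, hR⟩ := (ZSpan.fundamentalDomain_isBounded b).subset_closedBall 0
  -- every point of `W` lies within `R` of the lattice `W ∩ Γ`
  suffices (Γ : Set E) + (W : Set E) = Γ + W.subtype '' Metric.closedBall 0 R from
    this ▸ AddSubgroup.isClosed_of_discrete.add_right_of_isCompact
      ((isCompact_closedBall 0 R).image continuous_subtype_val)
  refine Subset.antisymm ?_ (add_subset_add_left (image_subset_range _ _ |>.trans (by simp)))
  rintro _ ⟨γ, hγ, w, hw, rfl⟩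
  obtain ⟨v, hv, -⟩ := ZSpan.exist_unique_vadd_mem_fundamentalDomain b ⟨w, hw⟩
  have hvΓ : ((v : W) : E) ∈ Γ := SetLike.le_def.mp hb.le v.2
  refine ⟨γ - v, Γ.sub_mem hγ hvΓ, _, ⟨(v : W) + ⟨w, hw⟩, hR hv, rfl⟩, ?_⟩
  simp only [subtype_apply, coe_add]
  abel

theorem IsClosed.add_submodule_of_disjoint {𝕜 E : Type*} [NontriviallyNormedField 𝕜]
    [CompleteSpace 𝕜] [NormedAddCommGroup E] [NormedSpace 𝕜 E] [FiniteDimensional 𝕜 E]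
    {A : Set E} {V U : Submodule 𝕜 E} (hA : IsClosed A) (hAV : A ⊆ V) (hVU : Disjoint V U) :
    IsClosed (A + (U : Set E)) := by
  have hker : (V.subtype.coprod U.subtype).ker = ⊥ := by
    rw [LinearMap.ker_coprod_of_disjoint_range _ _ (by simpa using hVU), ker_subtype,
      ker_subtype, prod_bot]
  suffices A + (U : Set E) = V.subtype.coprod U.subtype '' ((V.subtype ⁻¹' A) ×ˢ univ) by
    rw [this]
    exact (LinearMap.isClosedEmbedding_of_injective hker).isClosedMap _
      ((hA.preimage continuous_subtype_val).prod isClosed_univ)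
  ext x
  constructor
  · rintro ⟨a, ha, u, hu, rfl⟩
    exact ⟨(⟨a, hAV ha⟩, ⟨u, hu⟩), ⟨ha, trivial⟩, rfl⟩
  · rintro ⟨⟨a, u⟩, ⟨ha, -⟩, rfl⟩
    exact ⟨a, ha, u, u.2, rfl⟩

section ComplexStructure

variable {R M : Type*} [CommRing R] [AddCommGroup M] [Module R M] {J : M →ₗ[R] M}

theorem Submodule.map_sup_map_le (hJ : ∀ x, J (J x) = -x) (W : Submodule R M) :
    (W ⊔ W.map J).map J ≤ W ⊔ W.map J := by
  rw [Submodule.map_sup]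
  refine sup_le le_sup_right (le_trans ?_ le_sup_left)
  rintro _ ⟨_, ⟨w, hw, rfl⟩, rfl⟩
  rw [hJ]
  exact W.neg_mem hw

theorem Submodule.disjoint_map_of_inf_eq_bot (hJ : ∀ x, J (J x) = -x) {V W : Submodule R M}
    (hWV : W ≤ V) (hW : W ⊓ (V ⊓ V.map J) = ⊥) : Disjoint V (W.map J) := by
  rw [Submodule.disjoint_def]
  rintro _ hJw ⟨w, hw, rfl⟩
  have hwJV : w ∈ V.map J := ⟨-J w, V.neg_mem hJw, by rw [map_neg, hJ, neg_neg]⟩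
  have : w ∈ W ⊓ (V ⊓ V.map J) := ⟨hw, hWV hw, hwJV⟩
  rw [hW, mem_bot] at this
  rw [this, map_zero]

end ComplexStructure

section ComplexCoordinates

variable {E ι : Type*} [AddCommGroup E] [Module ℂ E] [Module ℝ E] [IsScalarTower ℝ ℂ E]
  [Fintype ι] {W : Submodule ℝ E} (b : Module.Basis ι ℝ W)

theorem Module.Basis.linearCombination_complex_eq (z : ι → ℂ) :
    Fintype.linearCombination ℂ (fun i => (b i : E)) z =
      (b.equivFun.symm (fun i => (z i).re) : E) +
        I • (b.equivFun.symm (fun i => (z i).im) : E) := by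
  simp only [Fintype.linearCombination_apply, Basis.equivFun_symm_apply, coe_sum,
    Submodule.coe_smul, Finset.smul_sum, ← Finset.sum_add_distrib]
  refine Finset.sum_congr rfl fun i _ => ?_
  rw [RCLike.real_smul_eq_coe_smul (K := ℂ) (E := E),
    RCLike.real_smul_eq_coe_smul (K := ℂ) (E := E), smul_smul, ← add_smul, mul_comm]
  exact congrArg (· • (b i : E)) (re_add_im (z i)).symm

variable {J : E →ₗ[ℝ] E}

theorem Module.Basis.range_linearCombination_complex (hJ : ∀ x, J x = I • x) :
    range (Fintype.linearCombination ℂ fun i => (b i : E)) =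
      ((W ⊔ W.map J : Submodule ℝ E) : Set E) := by
  ext x
  constructor
  · rintro ⟨z, rfl⟩
    rw [b.linearCombination_complex_eq]
    exact add_mem_sup (coe_mem _) ⟨_, coe_mem _, hJ _⟩
  · intro hx
    obtain ⟨w, hw, _, ⟨w', hw', rfl⟩, rfl⟩ := mem_sup.mp hx
    refine ⟨fun i => b.equivFun ⟨w, hw⟩ i + b.equivFun ⟨w', hw'⟩ i * I, ?_⟩
    simp [b.linearCombination_complex_eq, hJ]

theorem Module.Basis.linearCombination_complex_mem_iff (hJ : ∀ x, J x = I • x)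
    {Γ : AddSubgroup E} {V : Submodule ℝ E} (hb : span ℤ (range b) = Γ.submoduleOf W)
    (hΓV : (Γ : Set E) ⊆ V) (hWV : W ≤ V) (hVW : Disjoint V (W.map J)) (z : ι → ℂ) :
    Fintype.linearCombination ℂ (fun i => (b i : E)) z ∈ Γ ↔ ∀ i, ∃ n : ℤ, z i = n := by
  have hbΓ (i : ι) : (b i : E) ∈ Γ := SetLike.le_def.mp hb.le (subset_span (mem_range_self i))
  constructor
  · intro hz
    rw [b.linearCombination_complex_eq] at hz
    set x : W := b.equivFun.symm fun i => (z i).re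
    set y : W := b.equivFun.symm fun i => (z i).im
    have hIy : I • (y : E) = 0 := by
      refine disjoint_def.mp hVW _ ?_ ⟨y, y.2, hJ _⟩
      rw [show I • (y : E) = (x + I • y) - x by abel]
      exact V.sub_mem (hΓV hz) (hWV x.2)
    have hy : y = 0 := by
      simpa using (smul_eq_zero.mp hIy).resolve_left I_ne_zero
    have him (i : ι) : (z i).im = 0 := congrFun (b.equivFun.symm.map_eq_zero_iff.mp hy) i
    rw [hy, ZeroMemClass.coe_zero, smul_zero, add_zero] at hz
    have hx : x ∈ span ℤ (range b) := hb ▸ hz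
    intro i
    obtain ⟨n, hn⟩ := (b.mem_span_iff_repr_mem ℤ x).mp hx i
    have hre : b.repr x i = (z i).re := by
      rw [← b.equivFun_apply, LinearEquiv.apply_symm_apply]
    exact ⟨n, Complex.ext (by simpa [hre] using hn.symm) (by simpa using him i)⟩
  · intro hz
    choose n hn using hz
    rw [Fintype.linearCombination_apply]
    refine Γ.sum_mem fun i _ => ?_
    rw [hn i, Int.cast_smul_eq_zsmul]
    exact Γ.zsmul_mem (hbΓ i) _

end ComplexCoordinates

theorem complement_gives_closed_torus_subgroup_general
    (ℓ : ℕ) (Γ : AddSubgroup (Fin ℓ → ℂ)) [DiscreteTopology Γ]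
    (J : (Fin ℓ → ℂ) →ₗ[ℝ] (Fin ℓ → ℂ)) (hJ : ∀ z, J z = Complex.I • z)
    (V : Submodule ℝ (Fin ℓ → ℂ)) (hV : V = Submodule.span ℝ (Γ : Set (Fin ℓ → ℂ)))
    (W : Submodule ℝ (Fin ℓ → ℂ)) (hWV : W ≤ V)
    (hWdisj : W ⊓ (V ⊓ V.map J) = ⊥)
    (hlattice : Submodule.span ℝ ((W : Set (Fin ℓ → ℂ)) ∩ (Γ : Set (Fin ℓ → ℂ))) = W)
    (s : ℕ) (hs : s = Module.finrank ℝ W) :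
    -- `W + iW` is a complex subspace,
    (W ⊔ W.map J).map J ≤ W ⊔ W.map J ∧
    -- whose image in `Q = ℂ^ℓ/Γ` is closed
    IsClosed (((W ⊔ W.map J : Submodule ℝ (Fin ℓ → ℂ)).toAddSubgroup.map
        (QuotientAddGroup.mk' Γ) : AddSubgroup ((Fin ℓ → ℂ) ⧸ Γ)) : Set ((Fin ℓ → ℂ) ⧸ Γ)) ∧
    -- and isomorphic as a topological group to `(ℂ*)^s`
    ∃ e : ((W ⊔ W.map J : Submodule ℝ (Fin ℓ → ℂ)).toAddSubgroup.map
        (QuotientAddGroup.mk' Γ) : AddSubgroup ((Fin ℓ → ℂ) ⧸ Γ)) ≃ₜ (Fin s → ℂˣ),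
      ∀ x y, e (x + y) = e x * e y := by
  subst hs
  have hJJ (z : Fin ℓ → ℂ) : J (J z) = -z := by rw [hJ, hJ, smul_smul, I_mul_I, neg_one_smul]
  have hΓV : (Γ : Set (Fin ℓ → ℂ)) ⊆ V := hV ▸ subset_span
  have hVJW : Disjoint V (W.map J) := disjoint_map_of_inf_eq_bot hJJ hWV hWdisj
  obtain ⟨b, hb⟩ := exists_basis_span_int_eq_submoduleOf hlattice
  let f := Fintype.linearCombination ℂ fun i => (b i : Fin ℓ → ℂ)
  let φ := (QuotientAddGroup.mk' Γ).comp f.toAddMonoidHom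
  have hrange : φ.range = (W ⊔ W.map J).toAddSubgroup.map (QuotientAddGroup.mk' Γ) := by
    rw [AddMonoidHom.range_comp]
    congr 1
    exact SetLike.coe_injective
      ((AddMonoidHom.coe_range _).trans (b.range_linearCombination_complex hJ))
  have hclosed : IsClosed (φ.range : Set ((Fin ℓ → ℂ) ⧸ Γ)) := by
    rw [hrange, AddSubgroup.coe_map]
    refine QuotientAddGroup.isClosed_image_mk Γ ?_
    rw [Submodule.coe_toAddSubgroup, coe_sup, add_comm, ← add_assoc]
    refine (isClosed_add_of_span_inter_eq hlattice).add_submodule_of_disjoint ?_ hVJW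
    rintro _ ⟨γ, hγ, w, hw, rfl⟩
    exact V.add_mem (hΓV hγ) (hWV hw)
  have hφ : Continuous φ :=
    QuotientAddGroup.continuous_mk.comp (f.restrictScalars ℝ).continuous_of_finiteDimensional
  have hker (z : Fin (Module.finrank ℝ W) → ℂ) : φ z = 0 ↔ ∀ i, ∃ n : ℤ, z i = n := by
    rw [AddMonoidHom.comp_apply, QuotientAddGroup.mk'_apply, QuotientAddGroup.eq_zero_iff]
    exact b.linearCombination_complex_mem_iff hJ hb hΓV hWV hVJW z
  rw [← hrange]
  exact ⟨map_sup_map_le hJJ W, hclosed, φ.exists_homeomorph_range_units hφ hclosed hker⟩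

/-- Let `Q = ℂ^ℓ/Γ`, `V` the real span of `Γ`, assumed a proper real subspace which is not
complex. If `W` is a real complement of `V ∩ iV` in `V` such that `W ∩ Γ` is a lattice of full
rank in `W`, then the image of `W + iW` in `Q`, i.e. `(W + iW)/(W ∩ Γ)`, is a closed complex
subgroup of `Q` isomorphic (as a topological group) to `(ℂ*)^s`, `s = dim_ℝ W`. -/
theorem complement_gives_closed_torus_subgroup
    (ℓ : ℕ) (Γ : AddSubgroup (Fin ℓ → ℂ)) [DiscreteTopology Γ]
    (J : (Fin ℓ → ℂ) →ₗ[ℝ] (Fin ℓ → ℂ)) (hJ : ∀ z, J z = Complex.I • z)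
    (V : Submodule ℝ (Fin ℓ → ℂ)) (hV : V = Submodule.span ℝ (Γ : Set (Fin ℓ → ℂ)))
    (hVnotcomplex : ¬ V.map J ≤ V) (hVproper : V ≠ ⊤)
    (W : Submodule ℝ (Fin ℓ → ℂ)) (hWV : W ≤ V)
    (hWdisj : W ⊓ (V ⊓ V.map J) = ⊥) (hWspan : W ⊔ (V ⊓ V.map J) = V)
    (hlattice : Submodule.span ℝ ((W : Set (Fin ℓ → ℂ)) ∩ (Γ : Set (Fin ℓ → ℂ))) = W)
    (s : ℕ) (hs : s = Module.finrank ℝ W) :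
    -- `W + iW` is a complex subspace,
    (W ⊔ W.map J).map J ≤ W ⊔ W.map J ∧
    -- whose image in `Q = ℂ^ℓ/Γ` is closed
    IsClosed (((W ⊔ W.map J : Submodule ℝ (Fin ℓ → ℂ)).toAddSubgroup.map
        (QuotientAddGroup.mk' Γ) : AddSubgroup ((Fin ℓ → ℂ) ⧸ Γ)) : Set ((Fin ℓ → ℂ) ⧸ Γ)) ∧
    -- and isomorphic as a topological group to `(ℂ*)^s`
    ∃ e : ((W ⊔ W.map J : Submodule ℝ (Fin ℓ → ℂ)).toAddSubgroup.map
        (QuotientAddGroup.mk' Γ) : AddSubgroup ((Fin ℓ → ℂ) ⧸ Γ)) ≃ₜ (Fin s → ℂˣ),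
      ∀ x y, e (x + y) = e x * e y :=
  complement_gives_closed_torus_subgroup_general ℓ Γ J hJ V hV W hWV hWdisj hlattice s hs
end Lattice
end

section
/- Let G be a connected solvable complex Lie group that has no positive-dimensional proper closed complex subgroups. Then G is Abelian. -/
/-!
Every centralizer `C(S)` is a closed complex subgroup: it is closed because `G` is Hausdorff, and
if a holomorphic curve `φ` has `φ t ∈ C(S)` for real `t`, then for each `s ∈ S` the holomorphic
map `z ↦ φ z * s * (φ z)⁻¹` equals `s` on `ℝ`, hence everywhere by the identity theorem. So every
centralizer is `G` or discrete. If the centre were discrete, descend along the connected sets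
`T₀ = G`, `T_{k+1} = [T_k, T_k]`, which reach `{1}` by solvability: once `T_{k+1} = {1}`, the set
`T_k` is connected, commutative and contains `1`, so it lies in the discrete group `C(T_k)` or,
when `C(T_k) = G`, in the centre; either way `T_k = {1}`. At `k = 0` this makes `G` trivial.
-/

open scoped Manifold
open Set Filter Topology

section IdentityTheorem

variable {E : Type*} [NormedAddCommGroup E] [NormedSpace ℂ E] [CompleteSpace E]
  {M : Type*} [TopologicalSpace M] [ChartedSpace E M] [IsManifold 𝓘(ℂ, E) 1 M] [T1Space M]
  {f : ℂ → M} {c : M}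

theorem MDifferentiable.eventually_eq_of_frequently_eq (hf : MDifferentiable 𝓘(ℂ, ℂ) 𝓘(ℂ, E) f)
    {z₀ : ℂ} (h : ∃ᶠ z in 𝓝[≠] z₀, f z = c) : ∀ᶠ z in 𝓝 z₀, f z = c := by
  have hcont : Continuous f := hf.continuous
  have hz₀ : f z₀ = c := isClosed_singleton.mem_of_frequently_of_tendsto h
    (hcont.continuousAt.mono_left nhdsWithin_le_nhds)
  set e := extChartAt 𝓘(ℂ, E) c
  set U := f ⁻¹' e.source
  have hU : U ∈ 𝓝 z₀ := ((isOpen_extChartAt_source c).preimage hcont).mem_nhds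
    (by simp [hz₀])
  have he : AnalyticAt ℂ (e ∘ f) z₀ := by
    refine DifferentiableOn.analyticAt (s := U) ?_ hU
    exact (((contMDiffOn_extChartAt (n := 1)).mdifferentiableOn one_ne_zero).comp
      hf.mdifferentiableOn fun z hz => by rwa [← extChartAt_source 𝓘(ℂ, E)]).differentiableOn
  have hev : ∀ᶠ z in 𝓝 z₀, e (f z) = e c :=
    (he.frequently_eq_iff_eventually_eq analyticAt_const).mp (h.mono fun z hz => by simp [hz])
  filter_upwards [hev, hU] with z hz hzU
  exact e.injOn hzU (mem_extChartAt_source c) hz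

theorem MDifferentiable.eq_const_of_frequently_eq (hf : MDifferentiable 𝓘(ℂ, ℂ) 𝓘(ℂ, E) f)
    {z₀ : ℂ} (h : ∃ᶠ z in 𝓝[≠] z₀, f z = c) (z : ℂ) : f z = c := by
  have hA : {z | ∀ᶠ w in 𝓝 z, f w = c} = derivedSet {w | f w = c} := by
    ext z
    rw [mem_derivedSet, accPt_iff_frequently_nhdsNE]
    exact ⟨fun h => (h.filter_mono nhdsWithin_le_nhds).frequently,
      hf.eventually_eq_of_frequently_eq⟩
  have hclopen : IsClopen {z | ∀ᶠ w in 𝓝 z, f w = c} :=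
    ⟨hA ▸ isClosed_derivedSet _, isOpen_setOfPred_eventually_nhds⟩
  have hz₀ : z₀ ∈ {z | ∀ᶠ w in 𝓝 z, f w = c} := hf.eventually_eq_of_frequently_eq h
  exact (hclopen.eq_univ ⟨z₀, hz₀⟩ ▸ mem_univ z : z ∈ {z | ∀ᶠ w in 𝓝 z, f w = c}).self_of_nhds

theorem MDifferentiable.eq_const_of_forall_real_eq (hf : MDifferentiable 𝓘(ℂ, ℂ) 𝓘(ℂ, E) f)
    (h : ∀ t : ℝ, f t = c) (z : ℂ) : f z = c := by
  have hreal : Tendsto ((↑) : ℝ → ℂ) (𝓝[≠] 0) (𝓝[≠] 0) := by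
    simpa only [Complex.ofReal_zero] using
      Complex.continuous_ofReal.continuousWithinAt.tendsto_nhdsWithin (x := 0) (s := {0}ᶜ)
        (t := {0}ᶜ) fun t ht => by simpa using ht
  exact hf.eq_const_of_frequently_eq (hreal.frequently (Frequently.of_forall h)) z

end IdentityTheorem

section LieGroup

variable {E : Type*} [NormedAddCommGroup E] [NormedSpace ℂ E] [CompleteSpace E]
  {G : Type*} [TopologicalSpace G] [ChartedSpace E G] [Group G] [LieGroup 𝓘(ℂ, E) 1 G]

theorem MDifferentiable.apply_mem_centralizer {φ : ℂ → G}
    (hφ : MDifferentiable 𝓘(ℂ, ℂ) 𝓘(ℂ, E) φ) {S : Set G}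
    (h : ∀ t : ℝ, φ t ∈ Subgroup.centralizer S) (z : ℂ) : φ z ∈ Subgroup.centralizer S := by
  have : T1Space G := ChartedSpace.t1Space E G
  refine Subgroup.mem_centralizer_iff.mpr fun s hs => ?_
  have hconj : MDifferentiable 𝓘(ℂ, ℂ) 𝓘(ℂ, E) fun w => φ w * s * (φ w)⁻¹ :=
    (((contMDiff_id.mul contMDiff_const).mul contMDiff_id.inv).mdifferentiable
      one_ne_zero).comp hφ
  have := hconj.eq_const_of_forall_real_eq
    (fun t => by rw [← Subgroup.mem_centralizer_iff.mp (h t) s hs, mul_inv_cancel_right]) z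
  exact (mul_inv_eq_iff_eq_mul.mp this).symm

end LieGroup

theorem IsPreconnected.subset_one_of_subset_discrete {G : Type*} [TopologicalSpace G] [Group G]
    {H : Subgroup G} [DiscreteTopology H] {S : Set G} (hS : IsPreconnected S) (h1 : 1 ∈ S)
    (hSH : S ⊆ H) : S ⊆ {1} := fun _ hx =>
  hS.constant_of_mapsTo (isDiscrete_iff_discreteTopology.mpr ‹_›) continuousOn_id hSH hx h1

section Solvable

open scoped commutatorElement

variable (G : Type*) [Group G]

/-- Unlike `derivedSeries G k`, these sets are visibly connected. -/
def iteratedCommutatorSet : ℕ → Set G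
  | 0 => univ
  | k + 1 => (fun p : G × G => ⁅p.1, p.2⁆) '' (iteratedCommutatorSet k ×ˢ iteratedCommutatorSet k)

namespace iteratedCommutatorSet

theorem one_mem (k : ℕ) : (1 : G) ∈ iteratedCommutatorSet G k := by
  induction k with
  | zero => trivial
  | succ k ih => exact ⟨(1, 1), ⟨ih, ih⟩, commutatorElement_one_left 1⟩

theorem subset_derivedSeries (k : ℕ) : iteratedCommutatorSet G k ⊆ derivedSeries G k := by
  induction k with
  | zero => exact subset_univ _
  | succ k ih =>
    rintro _ ⟨⟨x, y⟩, ⟨hx, hy⟩, rfl⟩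
    rw [derivedSeries_succ]
    exact Subgroup.commutator_mem_commutator (ih hx) (ih hy)

theorem isConnected [TopologicalSpace G] [IsTopologicalGroup G] [ConnectedSpace G] (k : ℕ) :
    IsConnected (iteratedCommutatorSet G k) := by
  induction k with
  | zero => exact isConnected_univ
  | succ k ih => exact (ih.prod ih).image _ (by simp only [commutatorElement_def]; fun_prop)

end iteratedCommutatorSet

theorem commute_of_forall_centralizer_eq_top_or_discrete [TopologicalSpace G]
    [IsTopologicalGroup G] [ConnectedSpace G] [Group.IsSolvable G]
    (h : ∀ S : Set G, Subgroup.centralizer S = ⊤ ∨ DiscreteTopology (Subgroup.centralizer S))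
    (a b : G) : Commute a b := by
  by_contra hab
  have hZ : DiscreteTopology (Subgroup.centralizer (univ : Set G)) := (h univ).resolve_left
    fun hZ => hab (Subgroup.mem_centralizer_iff.mp (hZ ▸ Subgroup.mem_top b) a (mem_univ a))
  have key (S : Set G) (hS : IsPreconnected S) (h1 : 1 ∈ S)
      (hcomm : ∀ x ∈ S, ∀ y ∈ S, Commute x y) : S ⊆ {1} := by
    rcases h S with htop | _
    · refine hS.subset_one_of_subset_discrete (H := Subgroup.centralizer univ) h1 fun x hx => ?_
      refine Subgroup.mem_centralizer_iff.mpr fun g _ => ?_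
      exact (Subgroup.mem_centralizer_iff.mp (htop ▸ Subgroup.mem_top g) x hx).symm
    · exact hS.subset_one_of_subset_discrete (H := Subgroup.centralizer S) h1 fun x hx =>
        Subgroup.mem_centralizer_iff.mpr fun y hy => hcomm y hy x hx
  have step (k : ℕ) (hk : iteratedCommutatorSet G (k + 1) ⊆ {1}) :
      iteratedCommutatorSet G k ⊆ {1} :=
    key _ (iteratedCommutatorSet.isConnected G k).isPreconnected (iteratedCommutatorSet.one_mem G k)
      fun x hx y hy => commutatorElement_eq_one_iff_commute.mp (hk ⟨(x, y), ⟨hx, hy⟩, rfl⟩)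
  obtain ⟨n, hn⟩ := Group.IsSolvable.solvable (G := G)
  have htop : iteratedCommutatorSet G n ⊆ {1} := by
    simpa [hn] using iteratedCommutatorSet.subset_derivedSeries G n
  have ha : a = 1 := Nat.decreasingInduction (motive := fun k _ => iteratedCommutatorSet G k ⊆ {1})
    (fun k _ => step k) htop (Nat.zero_le n) (mem_univ a)
  exact hab (ha ▸ Commute.one_left b)

end Solvable

/-- Here a closed subgroup `H` is a *complex* subgroup iff it absorbs the complexification of
every holomorphic one-parameter subgroup whose real points lie in `H`, and positive-dimensional
means non-discrete. -/
theorem solvable_no_proper_complex_subgroup_abelian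
    (E : Type) [NormedAddCommGroup E] [NormedSpace ℂ E] [FiniteDimensional ℂ E]
    (G : Type) [TopologicalSpace G] [ChartedSpace E G] [Group G]
    [LieGroup 𝓘(ℂ, E) (⊤ : ℕ∞) G] [ConnectedSpace G] [Group.IsSolvable G]
    (hno : ∀ H : Subgroup G, IsClosed (H : Set G) → H ≠ ⊤ →
      (∀ φ : ℂ → G, MDifferentiable 𝓘(ℂ, ℂ) 𝓘(ℂ, E) φ →
        (∀ z w : ℂ, φ (z + w) = φ z * φ w) →
        (∀ t : ℝ, φ (t : ℂ) ∈ H) → ∀ z : ℂ, φ z ∈ H) →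
      DiscreteTopology H) :
    ∀ a b : G, a * b = b * a := by
  intro a b
  have : T1Space G := ChartedSpace.t1Space E G
  have : IsTopologicalGroup G := topologicalGroup_of_lieGroup 𝓘(ℂ, E) (⊤ : ℕ∞)
  refine commute_of_forall_centralizer_eq_top_or_discrete G (fun S => ?_) a b
  exact (em _).imp_right fun hS => hno _ (Set.isClosed_centralizer S) hS
    fun φ hφ _ hreal => hφ.apply_mem_centralizer hreal
end

section
/- For n ≥ 2, the group SL_{n+1}(ℝ), acting on ℙⁿ(ℂ) via the inclusion SL_{n+1}(ℝ) ⊂ SL_{n+1}(ℂ), has exactly two orbits: the closed orbit ℝℙⁿ (points with homogeneous coordinates representable by real vectors) and the open orbit ℙⁿ(ℂ) \ ℝℙⁿ. -/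
/-- A nonzero vector of `ℂ^n` represents a point of `ℝℙ^{n-1} ⊂ ℙ^{n-1}(ℂ)` iff some nonzero
complex multiple of it has real entries. -/
def IsRealPoint {n : ℕ} (z : Fin n → ℂ) : Prop :=
  ∃ c : ℂˣ, ∀ j, ((c : ℂ) * z j).im = 0

open Matrix

namespace SLTO

variable {d : ℕ}

/-- identity plus extra column at `p` equal to `v` (should have `v p = 0`). -/
def elim (p : Fin d) (v : Fin d → ℝ) : Matrix (Fin d) (Fin d) ℝ :=
  1 + Matrix.of (fun k j => if j = p then v k else 0)

lemma elim_mulVec (p : Fin d) (v : Fin d → ℝ) (x : Fin d → ℝ) :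
    (elim p v).mulVec x = x + x p • v := by
  funext k
  rw [show elim p v = 1 + Matrix.of (fun k j => if j = p then v k else 0) from rfl,
    Matrix.add_mulVec, Matrix.one_mulVec]
  simp only [Pi.add_apply, Pi.smul_apply, smul_eq_mul, Matrix.mulVec, dotProduct,
    Matrix.of_apply, ite_mul, zero_mul]
  rw [Finset.sum_ite_eq' Finset.univ p (fun j => v k * x j)]
  simp [mul_comm]

lemma elim_det (p : Fin d) (v : Fin d → ℝ) (hv : v p = 0) : (elim p v).det = 1 := by
  have h : elim p v = 1 + Matrix.replicateCol Unit v * Matrix.replicateRow Unit (Pi.single p (1:ℝ)) := by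
    ext k j
    simp [elim, Matrix.replicateCol, Matrix.replicateRow, Matrix.mul_apply, Pi.single_apply]
  rw [h, Matrix.det_one_add_replicateCol_mul_replicateRow]
  simp [dotProduct, Pi.single_apply, ite_mul, Finset.sum_ite_eq', hv]

def scale (p : Fin d) (a : ℝ) : Matrix (Fin d) (Fin d) ℝ :=
  Matrix.diagonal (fun k => if k = p then a else 1)

lemma scale_det (p : Fin d) (a : ℝ) : (scale p a).det = a := by
  simp [scale, Matrix.det_diagonal, Finset.prod_ite_eq']

lemma scale_mulVec (p : Fin d) (a : ℝ) (x : Fin d → ℝ) :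
    (scale p a).mulVec x = fun k => if k = p then a * x k else x k := by
  funext k
  rw [show scale p a = Matrix.diagonal (fun k => if k = p then a else 1) from rfl,
    Matrix.mulVec_diagonal]
  split <;> simp

lemma scale_mulVec_single (p : Fin d) (a : ℝ) (q : Fin d) (b : ℝ) :
    (scale p a).mulVec (Pi.single q b) = Pi.single q (if q = p then a * b else b) := by
  rw [scale_mulVec]
  funext k
  by_cases hk : k = p <;> by_cases hk2 : k = q <;>
    simp [hk, hk2, Pi.single_apply] <;> subst_vars <;> simp_all [eq_comm]

lemma exists_L1 (x : Fin d → ℝ) (hx : x ≠ 0) (p : Fin d) :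
    ∃ A : Matrix (Fin d) (Fin d) ℝ, A.det = 1 ∧ ∃ t : ℝ, t ≠ 0 ∧
      A.mulVec x = Pi.single p t := by
  obtain ⟨i, hi⟩ : ∃ i, x i ≠ 0 := by
    by_contra h; push_neg at h; exact hx (funext h)
  obtain ⟨B, hBdet, hBx⟩ : ∃ B : Matrix (Fin d) (Fin d) ℝ, B.det = 1 ∧ (B.mulVec x) p ≠ 0 := by
    by_cases hp : x p = 0
    · have hip : i ≠ p := fun h => hi (h ▸ hp)
      refine ⟨elim i (Pi.single p 1), elim_det _ _ (by simp [Pi.single_apply, hip]), ?_⟩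
      rw [elim_mulVec]
      simp [Pi.single_apply, hp, hi]
    · exact ⟨1, Matrix.det_one, by simpa [Matrix.one_mulVec] using hp⟩
  set x' := B.mulVec x with hx'
  refine ⟨elim p (fun k => if k = p then 0 else -x' k / x' p) * B, ?_, x' p, hBx, ?_⟩
  · rw [Matrix.det_mul, elim_det _ _ (by simp), hBdet, mul_one]
  · rw [← Matrix.mulVec_mulVec, ← hx', elim_mulVec]
    funext k
    by_cases hk : k = p
    · simp [Pi.single_apply, hk]
    · simp [Pi.single_apply, hk]
      field_simp
      ring

lemma exists_L2 (y : Fin d → ℝ) (p q i : Fin d) (hpq : p ≠ q) (hip : i ≠ p)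
    (hyi : y i ≠ 0) :
    ∃ A : Matrix (Fin d) (Fin d) ℝ, A.det = 1 ∧
      (∀ r : ℝ, A.mulVec (Pi.single p r) = Pi.single p r) ∧
      ∃ s : ℝ, s ≠ 0 ∧ A.mulVec y = Pi.single q s := by
  obtain ⟨B, hBdet, hBfix, hBq⟩ : ∃ B : Matrix (Fin d) (Fin d) ℝ, B.det = 1 ∧
      (∀ r, B.mulVec (Pi.single p r) = Pi.single p r) ∧ (B.mulVec y) q ≠ 0 := by
    by_cases hq : y q = 0
    · have hiq : i ≠ q := fun h => hyi (h ▸ hq)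
      refine ⟨elim i (Pi.single q 1), elim_det _ _ (by simp [Pi.single_apply, hiq]),
        fun r => ?_, ?_⟩
      · rw [elim_mulVec]; simp [Pi.single_apply, hip]
      · rw [elim_mulVec]; simp [Pi.single_apply, hq, hyi]
    · exact ⟨1, Matrix.det_one, fun r => Matrix.one_mulVec _, by simpa [Matrix.one_mulVec] using hq⟩
  set y' := B.mulVec y with hy'
  set E := elim q (fun k => if k = p ∨ k = q then 0 else -y' k / y' q) with hE
  set F := elim q (Pi.single p (-(y' p) / y' q)) with hF
  have hEdet : E.det = 1 := elim_det _ _ (by simp)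
  have hFdet : F.det = 1 := elim_det _ _ (by simp [Pi.single_apply, hpq.symm])
  have hEy : E.mulVec y' = fun k => if k = p then y' p else if k = q then y' q else 0 := by
    rw [hE, elim_mulVec]
    funext k
    by_cases hk : k = p
    · simp [hk, hpq]
    · by_cases hk2 : k = q
      · simp [hk, hk2, hpq.symm]
      · simp [hk, hk2]
        field_simp
        ring
  have hFy : F.mulVec (fun k => if k = p then y' p else if k = q then y' q else 0)
      = Pi.single q (y' q) := by
    rw [hF, elim_mulVec]
    funext k
    by_cases hk : k = p
    · simp [Pi.single_apply, hk, hpq, hpq.symm]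
      field_simp
      ring
    · by_cases hk2 : k = q
      · simp [Pi.single_apply, hk, hk2, hpq.symm]
      · simp [Pi.single_apply, hk, hk2, hpq.symm]
  refine ⟨F * E * B, by rw [Matrix.det_mul, Matrix.det_mul, hEdet, hFdet, hBdet]; ring,
    fun r => ?_, y' q, hBq, ?_⟩
  · rw [← Matrix.mulVec_mulVec, ← Matrix.mulVec_mulVec, hBfix]
    have h1 : E.mulVec (Pi.single p r) = Pi.single p r := by
      rw [hE, elim_mulVec]; simp [Pi.single_apply, hpq]
    have h2 : F.mulVec (Pi.single p r) = Pi.single p r := by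
      rw [hF, elim_mulVec]; simp [Pi.single_apply, hpq]
    rw [h1, h2]
  · rw [← Matrix.mulVec_mulVec, ← Matrix.mulVec_mulVec, ← hy', hEy, hFy]

lemma mulVec_map_im (A : Matrix (Fin d) (Fin d) ℝ) (z : Fin d → ℂ) (k : Fin d) :
    ((A.map Complex.ofReal).mulVec z k).im = A.mulVec (fun j => (z j).im) k := by
  simp [Matrix.mulVec, dotProduct, Complex.im_sum, Complex.mul_im]

lemma mulVec_map_re (A : Matrix (Fin d) (Fin d) ℝ) (z : Fin d → ℂ) (k : Fin d) :
    ((A.map Complex.ofReal).mulVec z k).re = A.mulVec (fun j => (z j).re) k := by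
  simp [Matrix.mulVec, dotProduct, Complex.re_sum, Complex.mul_re]

lemma mulVec_map_ofReal' (A : Matrix (Fin d) (Fin d) ℝ) (x : Fin d → ℝ) :
    (A.map Complex.ofReal).mulVec (fun j => (x j : ℂ)) = fun k => ((A.mulVec x k : ℝ) : ℂ) := by
  funext k
  simp [Matrix.mulVec, dotProduct]

lemma map_mul_ofReal (A B : Matrix (Fin d) (Fin d) ℝ) :
    (A * B).map Complex.ofReal = A.map Complex.ofReal * B.map Complex.ofReal :=
  Matrix.map_mul (f := Complex.ofRealHom)

lemma isRealPoint_mulVec (A : Matrix (Fin d) (Fin d) ℝ) {z : Fin d → ℂ}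
    (hz : IsRealPoint z) : IsRealPoint ((A.map Complex.ofReal).mulVec z) := by
  obtain ⟨c, hc⟩ := hz
  refine ⟨c, fun k => ?_⟩
  have h : (c : ℂ) * (A.map Complex.ofReal).mulVec z k
      = (A.map Complex.ofReal).mulVec (fun j => (c:ℂ) * z j) k := by
    simp only [Matrix.mulVec, dotProduct, Finset.mul_sum]
    exact Finset.sum_congr rfl (fun j _ => by simp [Matrix.map_apply]; ring)
  rw [h, mulVec_map_im]
  have h0 : (fun j => ((c:ℂ) * z j).im) = (0 : Fin d → ℝ) := funext fun j => hc j
  rw [h0, Matrix.mulVec_zero]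
  rfl

lemma adjugate_cancel {A : Matrix (Fin d) (Fin d) ℝ} (hA : A.det = 1) (z : Fin d → ℂ) :
    (A.adjugate.map Complex.ofReal).mulVec ((A.map Complex.ofReal).mulVec z) = z := by
  rw [Matrix.mulVec_mulVec, ← map_mul_ofReal, Matrix.adjugate_mul, hA, one_smul,
    Matrix.map_one Complex.ofReal Complex.ofReal_zero Complex.ofReal_one, Matrix.one_mulVec]

lemma glue {A A' : Matrix (Fin d) (Fin d) ℝ} (hA : A.det = 1) (hA' : A'.det = 1)
    {z w u : Fin d → ℂ} {c c' : ℂˣ}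
    (hz : (A.map Complex.ofReal).mulVec z = (c:ℂ) • u)
    (hw : (A'.map Complex.ofReal).mulVec w = (c':ℂ) • u) :
    ∃ B : Matrix (Fin d) (Fin d) ℝ, B.det = 1 ∧ ∃ e : ℂˣ,
      (B.map Complex.ofReal).mulVec z = (e:ℂ) • w := by
  have hu : (A'.adjugate.map Complex.ofReal).mulVec u = ((c':ℂ))⁻¹ • w := by
    have h1 := adjugate_cancel hA' w
    rw [hw, Matrix.mulVec_smul] at h1
    rw [← h1, smul_smul]
    simp
  refine ⟨A'.adjugate * A, ?_, c * c'⁻¹, ?_⟩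
  · rw [Matrix.det_mul, hA, mul_one, Matrix.det_adjugate, hA', one_pow]
  · rw [map_mul_ofReal, ← Matrix.mulVec_mulVec, hz, Matrix.mulVec_smul, hu, smul_smul]
    norm_num [Units.val_mul]

lemma canon_real (p : Fin d) {z : Fin d → ℂ} (hz : z ≠ 0) (h : IsRealPoint z) :
    ∃ A : Matrix (Fin d) (Fin d) ℝ, A.det = 1 ∧ ∃ c : ℂˣ,
      (A.map Complex.ofReal).mulVec z
        = (c:ℂ) • fun k => if k = p then (1:ℂ) else 0 := by
  obtain ⟨c0, hc0⟩ := h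
  set x : Fin d → ℝ := fun j => ((c0:ℂ) * z j).re with hxdef
  have hxz : (fun j => (x j : ℂ)) = (c0:ℂ) • z := by
    funext j
    refine Complex.ext ?_ ?_
    · simp [hxdef]
    · simp [hxdef, hc0 j]
  have hx0 : x ≠ 0 := by
    intro h0
    apply hz
    funext j
    have h1 : (c0:ℂ) * z j = 0 := by
      have := congrFun hxz j
      rw [h0] at this
      simpa using this.symm
    rcases mul_eq_zero.mp h1 with h2 | h2
    · exact absurd h2 (Units.ne_zero c0)
    · exact h2
  obtain ⟨A, hAdet, t, ht, hAx⟩ := exists_L1 x hx0 p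
  have key : (c0:ℂ) • (A.map Complex.ofReal).mulVec z
      = fun k => ((Pi.single p t : Fin d → ℝ) k : ℂ) := by
    rw [← Matrix.mulVec_smul, ← hxz, mulVec_map_ofReal', hAx]
  refine ⟨A, hAdet, Units.mk0 (t:ℂ) (by exact_mod_cast ht) * c0⁻¹, ?_⟩
  funext k
  have hk := congrFun key k
  simp only [Pi.smul_apply, smul_eq_mul] at hk ⊢
  have hc0ne : (c0:ℂ) ≠ 0 := Units.ne_zero c0
  have : (A.map Complex.ofReal).mulVec z k
      = ((c0:ℂ))⁻¹ * ((Pi.single p t : Fin d → ℝ) k : ℂ) := by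
    rw [← hk]
    field_simp
  rw [this]
  by_cases hkp : k = p <;> simp [hkp, Pi.single_apply, Units.val_mul] <;> ring

lemma canon_nonreal (p q r : Fin d) (hpq : p ≠ q) (hpr : p ≠ r) (hqr : q ≠ r)
    {z : Fin d → ℂ} (h : ¬ IsRealPoint z) :
    ∃ A : Matrix (Fin d) (Fin d) ℝ, A.det = 1 ∧
      (A.map Complex.ofReal).mulVec z
        = fun k => if k = p then 1 else if k = q then Complex.I else 0 := by
  set x : Fin d → ℝ := fun j => (z j).re with hxdef
  set y : Fin d → ℝ := fun j => (z j).im with hydef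
  have indep : ∀ a b : ℝ, a • x + b • y = 0 → a = 0 ∧ b = 0 := by
    intro a b hab
    by_contra hab0
    have hc : ((b:ℂ) + (a:ℂ) * Complex.I) ≠ 0 := by
      intro h0
      apply hab0
      have hre := congrArg Complex.re h0
      have him := congrArg Complex.im h0
      simp at hre him
      exact ⟨him, hre⟩
    apply h
    refine ⟨Units.mk0 _ hc, fun j => ?_⟩
    have hj := congrFun hab j
    simp only [Pi.add_apply, Pi.smul_apply, smul_eq_mul, Pi.zero_apply, hxdef, hydef] at hj
    simp [Complex.mul_im, Complex.add_re, Complex.add_im]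
    linarith
  have hx0 : x ≠ 0 := by
    intro h0
    have := (indep 1 0 (by simp [h0])).1
    norm_num at this
  obtain ⟨A1, hA1det, t, ht, hA1x⟩ := exists_L1 x hx0 p
  set y1 := A1.mulVec y with hy1def
  obtain ⟨i, hip, hyi⟩ : ∃ i, i ≠ p ∧ y1 i ≠ 0 := by
    by_contra hcon
    push_neg at hcon
    have h2 : A1.mulVec ((y1 p) • x + (-t) • y) = 0 := by
      rw [Matrix.mulVec_add, Matrix.mulVec_smul, Matrix.mulVec_smul, hA1x, ← hy1def]
      funext k
      by_cases hk : k = p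
      · simp [hk, Pi.single_apply]
        ring
      · simp [hk, Pi.single_apply, hcon k hk]
    have h3 : (y1 p) • x + (-t) • y = 0 := by
      have h4 := congrArg (fun v => A1.adjugate.mulVec v) h2
      simpa [Matrix.mulVec_mulVec, Matrix.adjugate_mul, hA1det, Matrix.mulVec_zero] using h4
    have := (indep _ _ h3).2
    exact ht (by linarith [this])
  obtain ⟨A2, hA2det, hA2fix, s, hs, hA2y⟩ := exists_L2 y1 p q i hpq hip hyi
  set D := scale r (t*s) * (scale q (1/s) * scale p (1/t)) with hD
  have hDdet : D.det = 1 := by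
    rw [hD, Matrix.det_mul, Matrix.det_mul, scale_det, scale_det, scale_det]
    field_simp
  have e1 : (1:ℝ)/t * t = 1 := by field_simp
  have e2 : (1:ℝ)/s * s = 1 := by field_simp
  have hDp : D.mulVec (Pi.single p t) = Pi.single p 1 := by
    rw [hD, ← Matrix.mulVec_mulVec, ← Matrix.mulVec_mulVec,
      scale_mulVec_single p (1/t) p t, scale_mulVec_single q (1/s) p _,
      scale_mulVec_single r (t*s) p _]
    simp [hpq, hpr, e1]
    exact inv_mul_cancel₀ ht
  have hDq : D.mulVec (Pi.single q s) = Pi.single q 1 := by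
    rw [hD, ← Matrix.mulVec_mulVec, ← Matrix.mulVec_mulVec,
      scale_mulVec_single p (1/t) q s, scale_mulVec_single q (1/s) q _,
      scale_mulVec_single r (t*s) q _]
    simp [hpq.symm, hqr, e2]
    exact inv_mul_cancel₀ hs
  refine ⟨D * A2 * A1, ?_, ?_⟩
  · rw [Matrix.det_mul, Matrix.det_mul, hDdet, hA2det, hA1det]; ring
  · have hAx : (D * A2 * A1).mulVec x = Pi.single p 1 := by
      rw [← Matrix.mulVec_mulVec, ← Matrix.mulVec_mulVec, hA1x, hA2fix, hDp]
    have hAy : (D * A2 * A1).mulVec y = Pi.single q 1 := by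
      rw [← Matrix.mulVec_mulVec, ← Matrix.mulVec_mulVec, ← hy1def, hA2y, hDq]
    funext k
    refine Complex.ext ?_ ?_
    · rw [mulVec_map_re]
      have : (fun j => (z j).re) = x := rfl
      rw [this, hAx]
      by_cases hkp : k = p
      · simp [hkp, Pi.single_apply, hpq]
      · by_cases hkq : k = q <;> simp [hkp, hkq, Pi.single_apply, hpq, hpq.symm]
    · rw [mulVec_map_im]
      have : (fun j => (z j).im) = y := rfl
      rw [this, hAy]
      by_cases hkp : k = p
      · simp [hkp, Pi.single_apply, hpq.symm]
      · by_cases hkq : k = q <;> simp [hkp, hkq, Pi.single_apply, hpq, hpq.symm]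

end SLTO

/-- For `n ≥ 2`, `SL_{n+1}(ℝ)` acting on `ℙⁿ(ℂ)` has exactly two orbits: the closed orbit
`ℝℙⁿ` and the open orbit `ℙⁿ(ℂ) \ ℝℙⁿ`. Expressed on homogeneous coordinates: real matrices of
determinant 1 preserve the property of being a real point, act transitively on real points, and
act transitively on non-real points (two representatives being related up to a nonzero complex
scalar). -/
theorem sl_real_two_orbits (n : ℕ) (hn : 2 ≤ n) :
    -- invariance of `ℝℙⁿ` (hence of its complement):
    (∀ A : Matrix (Fin (n + 1)) (Fin (n + 1)) ℝ, A.det = 1 → ∀ z : Fin (n + 1) → ℂ, z ≠ 0 →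
      (IsRealPoint z ↔ IsRealPoint ((A.map Complex.ofReal).mulVec z))) ∧
    -- transitivity on `ℝℙⁿ`:
    (∀ z w : Fin (n + 1) → ℂ, z ≠ 0 → w ≠ 0 → IsRealPoint z → IsRealPoint w →
      ∃ A : Matrix (Fin (n + 1)) (Fin (n + 1)) ℝ, A.det = 1 ∧
        ∃ c : ℂˣ, (A.map Complex.ofReal).mulVec z = (c : ℂ) • w) ∧
    -- transitivity on `ℙⁿ(ℂ) \ ℝℙⁿ`:
    (∀ z w : Fin (n + 1) → ℂ, z ≠ 0 → w ≠ 0 → ¬ IsRealPoint z → ¬ IsRealPoint w →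
      ∃ A : Matrix (Fin (n + 1)) (Fin (n + 1)) ℝ, A.det = 1 ∧
        ∃ c : ℂˣ, (A.map Complex.ofReal).mulVec z = (c : ℂ) • w) := by

  have hp : (0 : ℕ) < n + 1 := by omega
  have hq : (1 : ℕ) < n + 1 := by omega
  have hr : (2 : ℕ) < n + 1 := by omega
  set p : Fin (n+1) := ⟨0, hp⟩
  set q : Fin (n+1) := ⟨1, hq⟩
  set r : Fin (n+1) := ⟨2, hr⟩
  have hpq : p ≠ q := by simp [p, q, Fin.ext_iff]
  have hpr : p ≠ r := by simp [p, r, Fin.ext_iff]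
  have hqr : q ≠ r := by simp [q, r, Fin.ext_iff]
  refine ⟨?_, ?_, ?_⟩
  · intro A hA z _hz
    constructor
    · exact SLTO.isRealPoint_mulVec A
    · intro h'
      have h2 := SLTO.isRealPoint_mulVec A.adjugate h'
      rwa [SLTO.adjugate_cancel hA z] at h2
  · intro z w hz hw hrz hrw
    obtain ⟨A, hAdet, c, hc⟩ := SLTO.canon_real p hz hrz
    obtain ⟨A', hA'det, c', hc'⟩ := SLTO.canon_real p hw hrw
    exact SLTO.glue hAdet hA'det hc hc'
  · intro z w hz hw hrz hrw
    obtain ⟨A, hAdet, hc⟩ := SLTO.canon_nonreal p q r hpq hpr hqr hrz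
    obtain ⟨A', hA'det, hc'⟩ := SLTO.canon_nonreal p q r hpq hpr hqr hrw
    refine SLTO.glue (c := 1) (c' := 1)
      (u := fun k => if k = p then 1 else if k = q then Complex.I else 0) hAdet hA'det ?_ ?_
    · rw [hc]; simp
    · rw [hc']; simp
end

section
/- The group SL_m(ℍ) of invertible quaternionic m×m matrices of (Dieudonné) determinant 1, viewed as a subgroup of SL_{2m}(ℂ) via the standard identification ℍ^m ≅ ℂ^{2m}, acts transitively on the complex projective space ℙ^{2m−1}(ℂ). -/
/-- The quaternionic structure map on `ℂ^{2m} ≅ ℍ^m` (right multiplication by `j`),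
with `ℂ^{2m}` realized as `Fin m → ℂ × ℂ`. -/
def quatJ {m : ℕ} (z : Fin m → ℂ × ℂ) : Fin m → ℂ × ℂ :=
  fun k => (-(starRingEnd ℂ) (z k).2, (starRingEnd ℂ) (z k).1)

/-!
Write `ℂ × ℂ` as `ℍ` via `(a, b) ↦ a + j b`. Then complex scalars act by right multiplication,
`quatJ` is right multiplication by `j`, and left multiplication by a quaternionic matrix is a
complex-linear map commuting with `quatJ`. A nonzero vector `z` is brought to a complex multiple
of the basis vector `e_a` in three such steps: an elementary operation making `z a ≠ 0`, a column
operation clearing the other coordinates, and multiplication of coordinate `a` by a unit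
quaternion. The first two are `1 + N` with `N ^ 2 = 0`, the last has determinant
`normSq = 1`, so all lie in `SL_m(ℍ)`; since that monoid is closed under inverses, any two
nonzero vectors are related.
-/

open Quaternion

theorem LinearMap.det_one_add_of_isNilpotent {K V : Type*} [Field K] [AddCommGroup V]
    [Module K V] [FiniteDimensional K V] {N : Module.End K V} (hN : IsNilpotent N) :
    (1 + N).det = 1 := by
  have h := LinearMap.eval_charpoly (-N) 1
  rw [hN.neg.charpoly_eq_X_pow_finrank] at h
  simpa [sub_neg_eq_add] using h.symm

def quatEquiv : ℂ × ℂ ≃+ ℍ where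
  toFun p := ⟨p.1.re, p.1.im, p.2.re, -p.2.im⟩
  invFun q := (⟨q.re, q.imI⟩, ⟨q.imJ, -q.imK⟩)
  left_inv _ := Prod.ext rfl (Complex.ext rfl (neg_neg _))
  right_inv _ := QuaternionAlgebra.ext rfl rfl rfl (neg_neg _)
  map_add' _ _ := QuaternionAlgebra.ext rfl rfl rfl (neg_add _ _)

@[simp] lemma re_quatEquiv (p : ℂ × ℂ) : (quatEquiv p).re = p.1.re := rfl
@[simp] lemma imI_quatEquiv (p : ℂ × ℂ) : (quatEquiv p).imI = p.1.im := rfl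
@[simp] lemma imJ_quatEquiv (p : ℂ × ℂ) : (quatEquiv p).imJ = p.2.re := rfl
@[simp] lemma imK_quatEquiv (p : ℂ × ℂ) : (quatEquiv p).imK = -p.2.im := rfl

lemma quatEquiv_symm_apply (q : ℍ) : quatEquiv.symm q = (⟨q.re, q.imI⟩, ⟨q.imJ, -q.imK⟩) := rfl

@[simp] lemma quatEquiv_smul (c : ℂ) (p : ℂ × ℂ) : quatEquiv (c • p) = quatEquiv p * c := by
  ext <;> simp <;> ring

@[simp] lemma quatEquiv_ofReal (r : ℝ) : quatEquiv ((r : ℂ), 0) = r := by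
  ext <;> simp

lemma quatEquiv_quatJ {m : ℕ} (v : Fin m → ℂ × ℂ) (k : Fin m) :
    quatEquiv (quatJ v k) = quatEquiv (v k) * quatEquiv (0, 1) := by
  ext <;> simp [quatJ]

noncomputable def quatLeftMul (r : ℍ) : (ℂ × ℂ) →ₗ[ℂ] ℂ × ℂ where
  toFun p := quatEquiv.symm (r * quatEquiv p)
  map_add' p p' := by simp [mul_add]
  map_smul' c p := by apply quatEquiv.injective; simp [mul_assoc]

@[simp] lemma quatEquiv_quatLeftMul (r : ℍ) (p : ℂ × ℂ) :
    quatEquiv (quatLeftMul r p) = r * quatEquiv p := by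
  simp [quatLeftMul]

@[simp] lemma quatLeftMul_one_apply (p : ℂ × ℂ) : quatLeftMul 1 p = p := by
  simp [quatLeftMul]

lemma det_quatLeftMul (r : ℍ) : (quatLeftMul r).det = ((normSq r : ℝ) : ℂ) := by
  rw [← LinearMap.det_toMatrix (Module.Basis.finTwoProd ℂ), Matrix.det_fin_two]
  rw [normSq_def']
  apply Complex.ext <;>
    simp [LinearMap.toMatrix_apply, quatLeftMul, quatEquiv_symm_apply, pow_two] <;> ring

section

variable {m : ℕ}

lemma quatJ_add (v w : Fin m → ℂ × ℂ) : quatJ (v + w) = quatJ v + quatJ w := by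
  funext k; simp [quatJ, add_comm]

lemma quatJ_zero : quatJ (0 : Fin m → ℂ × ℂ) = 0 := by
  funext k; simp [quatJ]

lemma quatJ_neg (v : Fin m → ℂ × ℂ) : quatJ (-v) = -quatJ v := by
  funext k; simp [quatJ]

variable (m) in
def quatCommutant : Subring (Module.End ℂ (Fin m → ℂ × ℂ)) where
  carrier := {f | ∀ v, f (quatJ v) = quatJ (f v)}
  mul_mem' {f g} hf hg v := by rw [Module.End.mul_apply, hg v, hf (g v)]; rfl
  one_mem' _ := rfl
  add_mem' {f g} hf hg v := by
    rw [LinearMap.add_apply, LinearMap.add_apply, hf v, hg v, quatJ_add]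
  zero_mem' _ := quatJ_zero.symm
  neg_mem' {f} hf v := by rw [LinearMap.neg_apply, LinearMap.neg_apply, hf v, quatJ_neg]

variable (m) in
noncomputable def quatSL : Submonoid (Module.End ℂ (Fin m → ℂ × ℂ)) :=
  (quatCommutant m).toSubmonoid ⊓ MonoidHom.mker LinearMap.det

lemma mem_quatSL {f : Module.End ℂ (Fin m → ℂ × ℂ)} :
    f ∈ quatSL m ↔ (∀ v, f (quatJ v) = quatJ (f v)) ∧ f.det = 1 := Iff.rfl

lemma exists_mem_quatSL_mul_eq_one {f : Module.End ℂ (Fin m → ℂ × ℂ)} (hf : f ∈ quatSL m) :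
    ∃ g ∈ quatSL m, g * f = 1 := by
  obtain ⟨hJ, hdet⟩ := mem_quatSL.1 hf
  obtain ⟨g, hfg, hgf⟩ :=
    isUnit_iff_exists.1 ((LinearMap.isUnit_iff_isUnit_det f).2 (hdet ▸ isUnit_one))
  refine ⟨g, mem_quatSL.2 ⟨fun v => ?_, ?_⟩, hgf⟩
  · have hgfw : ∀ w, g (f w) = w := fun w => congr($hgf w)
    have hfgw : ∀ w, f (g w) = w := fun w => congr($hfg w)
    rw [← hgfw (quatJ (g v)), hJ, hfgw]
  · simpa [hdet] using congrArg LinearMap.det hgf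

noncomputable def quatDiagonal (d : Fin m → ℍ) : Module.End ℂ (Fin m → ℂ × ℂ) :=
  LinearMap.pi fun j => quatLeftMul (d j) ∘ₗ LinearMap.proj j

noncomputable def quatSingleCol (a : Fin m) (y : Fin m → ℍ) : Module.End ℂ (Fin m → ℂ × ℂ) :=
  LinearMap.pi fun j => quatLeftMul (y j) ∘ₗ LinearMap.proj a

lemma quatDiagonal_apply (d : Fin m → ℍ) (v : Fin m → ℂ × ℂ) (j : Fin m) :
    quatDiagonal d v j = quatLeftMul (d j) (v j) := rfl

lemma quatSingleCol_apply (a : Fin m) (y : Fin m → ℍ) (v : Fin m → ℂ × ℂ) (j : Fin m) :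
    quatSingleCol a y v j = quatLeftMul (y j) (v a) := rfl

lemma det_quatDiagonal (d : Fin m → ℍ) :
    (quatDiagonal d).det = ∏ j, ((normSq (d j) : ℝ) : ℂ) := by
  simp [quatDiagonal, LinearMap.det_pi, det_quatLeftMul]

lemma quatDiagonal_mem_quatSL {d : Fin m → ℍ} (hd : ∀ j, normSq (d j) = 1) :
    quatDiagonal d ∈ quatSL m := by
  refine mem_quatSL.2 ⟨fun v => funext fun j => ?_, ?_⟩
  · apply quatEquiv.injective; simp [quatDiagonal_apply, quatEquiv_quatJ, mul_assoc]
  · simp [det_quatDiagonal, hd]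

lemma quatSingleCol_mul_self {a : Fin m} {y : Fin m → ℍ} (hy : y a = 0) :
    quatSingleCol a y * quatSingleCol a y = 0 := by
  refine LinearMap.ext fun v => funext fun j => quatEquiv.injective ?_
  simp [quatSingleCol_apply, hy]

lemma one_add_quatSingleCol_mem_quatSL {a : Fin m} {y : Fin m → ℍ} (hy : y a = 0) :
    1 + quatSingleCol a y ∈ quatSL m := by
  refine mem_quatSL.2 ⟨fun v => ?_, ?_⟩
  · have hJ : quatSingleCol a y (quatJ v) = quatJ (quatSingleCol a y v) := by
      funext j; apply quatEquiv.injective; simp [quatSingleCol_apply, quatEquiv_quatJ, mul_assoc]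
    simp [hJ, quatJ_add]
  · exact LinearMap.det_one_add_of_isNilpotent ⟨2, by rw [pow_two, quatSingleCol_mul_self hy]⟩

lemma exists_mem_quatSL_apply_ne_zero {z : Fin m → ℂ × ℂ} (hz : z ≠ 0) (a : Fin m) :
    ∃ T ∈ quatSL m, T z a ≠ 0 := by
  by_cases hza : z a = 0
  · obtain ⟨k, hk⟩ := Function.ne_iff.1 hz
    have hka : k ≠ a := by rintro rfl; exact hk hza
    refine ⟨1 + quatSingleCol k (Pi.single a 1),
      one_add_quatSingleCol_mem_quatSL (by simp [hka]), ?_⟩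
    simpa [quatSingleCol_apply, hza] using hk
  · exact ⟨1, one_mem _, hza⟩

lemma exists_mem_quatSL_apply_eq_single {z : Fin m → ℂ × ℂ} {a : Fin m} (hza : z a ≠ 0) :
    ∃ U ∈ quatSL m, U z = Pi.single a (z a) := by
  have hq : quatEquiv (z a) ≠ 0 := by simpa using hza
  let y : Fin m → ℍ :=
    Function.update (fun j => -(quatEquiv (z j) * (quatEquiv (z a))⁻¹)) a 0
  refine ⟨1 + quatSingleCol a y, one_add_quatSingleCol_mem_quatSL (by simp [y]),
    funext fun j => quatEquiv.injective ?_⟩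
  by_cases hj : j = a
  · subst hj; simp [y, quatSingleCol_apply]
  · simp [y, quatSingleCol_apply, hj, mul_assoc, inv_mul_cancel₀ hq]

lemma exists_mem_quatSL_single_eq_smul_single {p : ℂ × ℂ} (hp : p ≠ 0) (a : Fin m) :
    ∃ D ∈ quatSL m, ∃ c : ℂˣ, D (Pi.single a p) = (c : ℂ) • Pi.single a ((1, 0) : ℂ × ℂ) := by
  have hq : quatEquiv p ≠ 0 := by simpa using hp
  refine ⟨quatDiagonal (Pi.mulSingle a (‖quatEquiv p‖ * (quatEquiv p)⁻¹)),
    quatDiagonal_mem_quatSL fun j => ?_, Units.mk0 (‖quatEquiv p‖ : ℂ) (by simpa using hq),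
    funext fun j => quatEquiv.injective ?_⟩
  · by_cases hj : j = a
    · subst hj; simp [normSq_eq_norm_mul_self, hq]
    · simp [hj]
  · by_cases hj : j = a
    · subst hj; simp [quatDiagonal_apply, mul_assoc, inv_mul_cancel₀ hq]
    · simp [quatDiagonal_apply, hj]

lemma exists_mem_quatSL_apply_eq_smul_single {z : Fin m → ℂ × ℂ} (hz : z ≠ 0) (a : Fin m) :
    ∃ g ∈ quatSL m, ∃ c : ℂˣ, g z = (c : ℂ) • Pi.single a ((1, 0) : ℂ × ℂ) := by
  obtain ⟨T, hT, hTz⟩ := exists_mem_quatSL_apply_ne_zero hz a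
  obtain ⟨U, hU, hUz⟩ := exists_mem_quatSL_apply_eq_single hTz
  obtain ⟨D, hD, c, hDz⟩ := exists_mem_quatSL_single_eq_smul_single hTz a
  exact ⟨D * U * T, mul_mem (mul_mem hD hU) hT, c, by simp [hUz, hDz]⟩

end

theorem sl_quaternionic_transitive_on_projective_space_general (m : ℕ) :
    ∀ z w : Fin m → ℂ × ℂ, z ≠ 0 → w ≠ 0 →
      ∃ f : (Fin m → ℂ × ℂ) →ₗ[ℂ] (Fin m → ℂ × ℂ),
        LinearMap.det f = 1 ∧ (∀ v, f (quatJ v) = quatJ (f v)) ∧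
        ∃ c : ℂˣ, f z = (c : ℂ) • w := by
  intro z w hz hw
  obtain ⟨a, -⟩ := Function.ne_iff.1 hz
  obtain ⟨gz, hgz, c, hc⟩ := exists_mem_quatSL_apply_eq_smul_single hz a
  obtain ⟨gw, hgw, d, hd⟩ := exists_mem_quatSL_apply_eq_smul_single hw a
  obtain ⟨h, hh, hhgw⟩ := exists_mem_quatSL_mul_eq_one hgw
  obtain ⟨hJ, hdet⟩ := mem_quatSL.1 (mul_mem hh hgz)
  refine ⟨h * gz, hdet, hJ, c * d⁻¹, ?_⟩
  have hw' : w = (d : ℂ) • h (Pi.single a (1, 0)) := by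
    rw [← map_smul, ← hd, ← Module.End.mul_apply, hhgw, Module.End.one_apply]
  rw [Module.End.mul_apply, hc, map_smul, hw', smul_smul]
  simp

/-- `SL_m(ℍ)`, realized inside `SL_{2m}(ℂ)` as the complex-linear maps of determinant 1
commuting with the quaternionic structure `J`, acts transitively on `ℙ^{2m−1}(ℂ)`:
any two nonzero vectors are related by such a map up to a nonzero complex scalar. -/
theorem sl_quaternionic_transitive_on_projective_space (m : ℕ) (hm : 1 ≤ m) :
    ∀ z w : Fin m → ℂ × ℂ, z ≠ 0 → w ≠ 0 →
      ∃ f : (Fin m → ℂ × ℂ) →ₗ[ℂ] (Fin m → ℂ × ℂ),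
        LinearMap.det f = 1 ∧ (∀ v, f (quatJ v) = quatJ (f v)) ∧
        ∃ c : ℂˣ, f z = (c : ℂ) • w :=
  sl_quaternionic_transitive_on_projective_space_general m
end
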